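/- (Closed-form all-order couplings of the Restricted Boltzmann Machine) Let m, n ≥ 1, b ∈ ℝ^m, c ∈ ℝ^n, w ∈ ℝ^{n×m}, and define the marginal RBM distribution on v ∈ {0,1}^m by p(v) = (1/Z) · ∏_{j=1}^m e^{b_j v_j} · ∏_{i=1}^n (1 + e^{c_i + Σ_{j=1}^m w_{ij} v_j}), with Z the normalizing constant. Then for any two distinct visible units j_1 ≠ j_2, writing e_S for the configuration equal to 1 exactly on S, the multiplicative 2-point interaction satisfies [p(e_{\{j_1,j_2\}}) · p(e_∅)] / [p(e_{\{j_1\}}) · p(e_{\{j_2\}})] = ∏_{i=1}^n [(1 + e^{c_i + w_{i j_1} + w_{i j_2}})(1 + e^{c_i})] / [(1 + e^{c_i + w_{i j_1}})(1 + e^{c_i + w_{i j_2}})]; in particular the interaction is independent of the visible biases b_j and of the partition function Z. -/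

import Mathlib

/-!
Each factor of the unnormalised marginal `∏ⱼ e^{bⱼvⱼ} ∏ᵢ (1 + e^{cᵢ + Σⱼ wᵢⱼvⱼ})` enters the
cross-ratio `f(e_{j₁j₂}) f(e_∅) / (f(e_{j₁}) f(e_{j₂}))` multiplicatively, so the interaction is the
product of the interactions of the factors. Constants (such as `1/Z`) and the visible-bias
factor, which is exponential in a quantity additive over the units, have interaction `1`;
each hidden unit contributes its own cross-ratio.
-/

open Finset Real

section MultInteraction

variable {ι K : Type*} [DecidableEq ι] [Field K]

/-- The multiplicative 2-point interaction `I^m_{j₁,j₂}`, where `f S` stands for `p(e_S)`. -/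
def multInteraction (f : Finset ι → K) (j₁ j₂ : ι) : K :=
  f {j₁, j₂} * f ∅ / (f {j₁} * f {j₂})

theorem multInteraction_mul (f g : Finset ι → K) (j₁ j₂ : ι) :
    multInteraction (fun S => f S * g S) j₁ j₂ =
      multInteraction f j₁ j₂ * multInteraction g j₁ j₂ := by
  simp only [multInteraction]
  ring

theorem multInteraction_const {Z : K} (hZ : Z ≠ 0) (j₁ j₂ : ι) :
    multInteraction (fun _ => Z) j₁ j₂ = 1 :=
  div_self (mul_ne_zero hZ hZ)

theorem multInteraction_div_const (f : Finset ι → K) {Z : K} (hZ : Z ≠ 0) (j₁ j₂ : ι) :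
    multInteraction (fun S => f S / Z) j₁ j₂ = multInteraction f j₁ j₂ := by
  simpa only [div_eq_mul_inv, multInteraction_const (inv_ne_zero hZ), mul_one] using
    multInteraction_mul f (fun _ => Z⁻¹) j₁ j₂

theorem multInteraction_prod {κ : Type*} (s : Finset κ) (f : κ → Finset ι → K) (j₁ j₂ : ι) :
    multInteraction (fun S => ∏ i ∈ s, f i S) j₁ j₂ =
      ∏ i ∈ s, multInteraction (f i) j₁ j₂ := by
  simp only [multInteraction, prod_mul_distrib, prod_div_distrib]

end MultInteraction

section RBM

variable {ι : Type*} [DecidableEq ι] {j₁ j₂ : ι}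

theorem multInteraction_exp_sum (b : ι → ℝ) (hj : j₁ ≠ j₂) :
    multInteraction (fun S => exp (∑ j ∈ S, b j)) j₁ j₂ = 1 := by
  simp only [multInteraction, sum_pair hj, sum_singleton, sum_empty, exp_add, exp_zero, mul_one]
  exact div_self (by positivity)

theorem multInteraction_one_add_exp (c : ℝ) (w : ι → ℝ) (hj : j₁ ≠ j₂) :
    multInteraction (fun S => 1 + exp (c + ∑ j ∈ S, w j)) j₁ j₂ =
      (1 + exp (c + w j₁ + w j₂)) * (1 + exp c) /
        ((1 + exp (c + w j₁)) * (1 + exp (c + w j₂))) := by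
  simp only [multInteraction, sum_pair hj, sum_singleton, sum_empty, add_zero, add_assoc]

theorem sum_mul_ite_decide_mem [Fintype ι] {R : Type*} [NonAssocSemiring R]
    (S : Finset ι) (f : ι → R) :
    ∑ j, f j * (if decide (j ∈ S) then (1 : R) else 0) = ∑ j ∈ S, f j := by
  simp only [decide_eq_true_eq, mul_ite, mul_one, mul_zero, sum_ite_mem, univ_inter]

end RBM

theorem rbm_mult_two_point_interaction_general (m n : ℕ)
    (b : Fin m → ℝ) (c : Fin n → ℝ) (w : Fin n → Fin m → ℝ)
    (j₁ j₂ : Fin m) (hj : j₁ ≠ j₂) :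
    let q : (Fin m → Bool) → ℝ := fun v =>
      (∏ j : Fin m, Real.exp (b j * (if v j then (1 : ℝ) else 0))) *
        ∏ i : Fin n,
          (1 + Real.exp (c i + ∑ j : Fin m, w i j * (if v j then (1 : ℝ) else 0)))
    let Z : ℝ := ∑ v : Fin m → Bool, q v
    let p : (Fin m → Bool) → ℝ := fun v => q v / Z
    let e : Finset (Fin m) → (Fin m → Bool) := fun S j => decide (j ∈ S)
    (p (e {j₁, j₂}) * p (e ∅)) / (p (e {j₁}) * p (e {j₂})) =
      ∏ i : Fin n,
        ((1 + Real.exp (c i + w i j₁ + w i j₂)) * (1 + Real.exp (c i))) /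
          ((1 + Real.exp (c i + w i j₁)) * (1 + Real.exp (c i + w i j₂))) := by
  intro q Z p e
  have hq : ∀ S, q (e S) = exp (∑ j ∈ S, b j) * ∏ i, (1 + exp (c i + ∑ j ∈ S, w i j)) := by
    intro S
    simp only [q, e, sum_mul_ite_decide_mem, ← exp_sum]
  have hZ : Z ≠ 0 := (sum_pos (fun v _ => by simp only [q]; positivity) univ_nonempty).ne'
  calc multInteraction (fun S => q (e S) / Z) j₁ j₂
      = multInteraction (fun S => q (e S)) j₁ j₂ := multInteraction_div_const _ hZ j₁ j₂
    _ = _ := by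
      simp only [hq, multInteraction_mul, multInteraction_exp_sum b hj, one_mul,
        multInteraction_prod, multInteraction_one_add_exp _ _ hj]

/-- Closed-form 2-point coupling of the Restricted Boltzmann Machine: the multiplicative
2-point interaction between two distinct visible units `j₁ ≠ j₂` of the marginal RBM
distribution equals
`∏ i, ((1 + e^{cᵢ + wᵢⱼ₁ + wᵢⱼ₂}) (1 + e^{cᵢ})) / ((1 + e^{cᵢ + wᵢⱼ₁}) (1 + e^{cᵢ + wᵢⱼ₂}))`;
in particular it is independent of the visible biases `b` and of the partition function. -/
theorem rbm_mult_two_point_interaction (m n : ℕ) (hm : 1 ≤ m) (hn : 1 ≤ n)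
    (b : Fin m → ℝ) (c : Fin n → ℝ) (w : Fin n → Fin m → ℝ)
    (j₁ j₂ : Fin m) (hj : j₁ ≠ j₂) :
    let q : (Fin m → Bool) → ℝ := fun v =>
      (∏ j : Fin m, Real.exp (b j * (if v j then (1 : ℝ) else 0))) *
        ∏ i : Fin n,
          (1 + Real.exp (c i + ∑ j : Fin m, w i j * (if v j then (1 : ℝ) else 0)))
    let Z : ℝ := ∑ v : Fin m → Bool, q v
    let p : (Fin m → Bool) → ℝ := fun v => q v / Z
    let e : Finset (Fin m) → (Fin m → Bool) := fun S j => decide (j ∈ S)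
    (p (e {j₁, j₂}) * p (e ∅)) / (p (e {j₁}) * p (e {j₂})) =
      ∏ i : Fin n,
        ((1 + Real.exp (c i + w i j₁ + w i j₂)) * (1 + Real.exp (c i))) /
          ((1 + Real.exp (c i + w i j₁)) * (1 + Real.exp (c i + w i j₂))) :=
  rbm_mult_two_point_interaction_general m n b c w j₁ j₂ hj
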